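/- arXiv:1804.01833 — 5 statements merged into one kernel-verified Lean document; each statement's English description precedes it below -/
import Mathlib

section
/- Let f : ℕ → ℕ be an injective function and S_f the associated isometry on ℓ²(ℕ) given by S_f e_k = e_{f(k)}. Then S_f is a pure isometry (i.e. ⋂_{n≥1} Ran(S_f^n) = {0}) if and only if ⋂_{n≥1} f^n(ℕ) = ∅. -/
noncomputable def e (k : ℕ) : lp (fun _ : ℕ => ℂ) 2 := lp.single 2 k 1

/-! Since `S ^ n` maps `e k` to `e (f^[n] k)`, a point of every `f^[n](ℕ)` gives a nonzero basis
vector in every range of `S ^ n`. Conversely, expanding `y` in the basis shows that the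
coordinate `j` of `(S ^ n) y` vanishes when `j ∉ f^[n](ℕ)`, and for `⋂ f^[n](ℕ) = ∅` every
coordinate is killed by some power. -/

open Function Set

local notation "ℓ²" => lp (fun _ : ℕ => ℂ) 2

theorem e_ne_zero (k : ℕ) : e k ≠ 0 := fun h => by
  simpa [e] using congrArg (fun x : ℓ² => x k) h

section ShiftByMap

variable {g : ℕ → ℕ} {T : ℓ² →L[ℂ] ℓ²}

theorem pow_apply_e (hT : ∀ k, T (e k) = e (g k)) (n k : ℕ) :
    (T ^ n) (e k) = e (g^[n] k) := by
  induction n generalizing k with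
  | zero => rfl
  | succ n ih => rw [iterate_succ_apply, pow_succ, mul_apply_eq_comp, hT, ih]

theorem apply_eq_zero_of_notMem_range (hT : ∀ k, T (e k) = e (g k)) {j : ℕ}
    (hj : j ∉ range g) (y : ℓ²) : T y j = 0 := by
  have hterm (k : ℕ) : T (lp.single 2 k (y k)) j = 0 := by
    have hjk : j ≠ g k := fun h => hj ⟨k, h.symm⟩
    rw [← mul_one (y k), ← smul_eq_mul, lp.single_smul, map_smul, ← e, hT, lp.coeFn_smul,
      Pi.smul_apply, e, lp.single_apply_ne _ _ _ hjk, smul_zero]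
  have hsum : HasSum (fun k => T (lp.single 2 k (y k)) j) (T y j) :=
    (lp.evalCLM ℂ (fun _ : ℕ => ℂ) 2 j ∘L T).hasSum (lp.hasSum_single ENNReal.ofNat_ne_top y)
  exact hsum.unique (by simpa only [hterm] using hasSum_zero)

end ShiftByMap

theorem stmt1_general (f : ℕ → ℕ)
    (S : lp (fun _ : ℕ => ℂ) 2 →L[ℂ] lp (fun _ : ℕ => ℂ) 2)
    (hS : ∀ k, S (e k) = e (f k)) :
    (⋂ n ∈ Set.Ici 1, Set.range ⇑(S ^ n)) = {0} ↔
      (⋂ n ∈ Set.Ici 1, Set.range f^[n]) = ∅ := by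
  simp only [Set.eq_empty_iff_forall_notMem, Set.eq_singleton_iff_unique_mem, Set.mem_iInter,
    Set.mem_Ici]
  constructor
  · rintro ⟨-, hpure⟩ j hj
    refine e_ne_zero j (hpure _ fun n hn => ?_)
    obtain ⟨k, rfl⟩ := hj n hn
    exact ⟨e k, pow_apply_e hS n k⟩
  · intro hempty
    refine ⟨fun n _ => ⟨0, map_zero _⟩, fun x hx => lp.ext (funext fun j => ?_)⟩
    push Not at hempty
    obtain ⟨n, hn, hj⟩ := hempty j
    obtain ⟨y, rfl⟩ := hx n hn
    exact apply_eq_zero_of_notMem_range (pow_apply_e hS n) hj y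

/-- `S_f` is a pure isometry iff `⋂_{n≥1} f^n(ℕ) = ∅`. -/
theorem stmt1 (f : ℕ → ℕ) (hf : Function.Injective f)
    (S : lp (fun _ : ℕ => ℂ) 2 →L[ℂ] lp (fun _ : ℕ => ℂ) 2)
    (hS : ∀ k, S (e k) = e (f k)) :
    (⋂ n ∈ Set.Ici 1, Set.range ⇑(S ^ n)) = {0} ↔
      (⋂ n ∈ Set.Ici 1, Set.range f^[n]) = ∅ :=
  stmt1_general f S hS
end

section
/- Let f : ℕ → ℕ be an injective function with no periodic points, i.e. f^h(k) ≠ k for all k ∈ ℕ and all h ≥ 1. Then the isometry S_f on ℓ²(ℕ) defined by S_f e_k = e_{f(k)} has empty point spectrum: there is no nonzero x ∈ ℓ²(ℕ) and λ ∈ ℂ with S_f x = λ x. -/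
/-!
Comparing coefficients in `S x = λ x` gives `λ x (f j) = x j`, and `λ x m = 0` for `m` outside the
range of `f`. If `x k ≠ 0`, then `λ ≠ 0`; along the forward orbit `f^[n] k` the coefficients are
`λ⁻ⁿ x k`, and along a backward orbit of `k` (which exists because nonzero coefficients sit on the
range of `f`) they are `λⁿ x k`. Without periodic points both orbits consist of distinct indices,
so square-summability of `x` forces both `‖λ‖ > 1` and `‖λ‖ < 1`.
-/

open Function Set

namespace Function

variable {α : Type*} {f : α → α}

theorem injective_iterate_apply {x : α} (hx : ∀ n, f^[n] x ∉ periodicPts f) :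
    Injective fun n => f^[n] x := by
  refine Injective.of_lt_imp_ne fun i j hij heq => hx j ⟨j - i, by omega, ?_⟩
  change f^[j - i] (f^[j] x) = f^[j] x
  rw [← heq, ← iterate_add_apply, Nat.sub_add_cancel hij.le, heq]

theorem injective_of_apply_succ_eq {b : ℕ → α} (hb : ∀ n, b n ∉ periodicPts f)
    (hfb : ∀ n, f (b (n + 1)) = b n) : Injective b := by
  have hiter : ∀ n k, f^[k] (b (n + k)) = b n := by
    intro n k
    induction k with
    | zero => rfl
    | succ k ih => rw [iterate_succ_apply, ← add_assoc, hfb, ih]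
  refine Injective.of_lt_imp_ne fun i j hij heq => ?_
  obtain ⟨k, rfl⟩ := Nat.exists_eq_add_of_lt hij
  exact hb i ⟨k + 1, k.succ_pos, (congrArg f^[k + 1] heq).trans (hiter i (k + 1))⟩

theorem exists_seq_apply_succ_eq {P : α → Prop} (hP : ∀ m, P m → ∃ j, f j = m ∧ P j)
    {k : α} (hk : P k) : ∃ b : ℕ → α, b 0 = k ∧ ∀ n, P (b n) ∧ f (b (n + 1)) = b n := by
  choose g hgf hgP using hP
  let c : ℕ → {m // P m} := fun n => (fun m : {m // P m} => ⟨g m m.2, hgP m m.2⟩)^[n] ⟨k, hk⟩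
  refine ⟨fun n => (c n).1, rfl, fun n => ⟨(c n).2, ?_⟩⟩
  simp only [c, iterate_succ_apply', hgf]

end Function

theorem Memℓp.norm_lt_one_of_apply_succ_eq_mul {ι 𝕜 : Type*} [NormedDivisionRing 𝕜]
    {p : ENNReal} (hp : 0 < p.toReal) {x : ι → 𝕜} (hx : Memℓp x p) {a : ℕ → ι}
    (ha : Injective a) (h0 : x (a 0) ≠ 0) {r : 𝕜} (hr : ∀ n, x (a (n + 1)) = r * x (a n)) :
    ‖r‖ < 1 := by
  have horbit : ∀ n, x (a n) = r ^ n * x (a 0) := by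
    intro n
    induction n with
    | zero => simp
    | succ n ih => rw [hr, ih, pow_succ', mul_assoc]
  have hsum : Summable fun n => ‖x (a 0)‖ ^ p.toReal * (‖r‖ ^ p.toReal) ^ n := by
    refine ((memℓp_gen_iff hp).mp hx).comp_injective ha |>.congr fun n => ?_
    rw [comp_apply, horbit, norm_mul, norm_pow, Real.mul_rpow (by positivity) (norm_nonneg _),
      ← Real.rpow_natCast, ← Real.rpow_natCast, ← Real.rpow_mul (norm_nonneg _),
      ← Real.rpow_mul (by positivity), mul_comm, mul_comm (n : ℝ)]
  have hgeom := summable_geometric_iff_norm_lt_one.mp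
    ((summable_mul_left_iff (by positivity)).mp hsum)
  rw [Real.norm_of_nonneg (by positivity)] at hgeom
  exact (Real.rpow_lt_one_iff' (norm_nonneg _) hp).mp hgeom

theorem Memℓp.eq_zero_of_mul_apply_eq {ι 𝕜 : Type*} [NormedDivisionRing 𝕜] {p : ENNReal}
    (hp : 0 < p.toReal) {x : ι → 𝕜} (hx : Memℓp x p) {f : ι → ι}
    (hf : ∀ k, k ∉ periodicPts f) {lam : 𝕜} (hshift : ∀ j, lam * x (f j) = x j)
    (hcorange : ∀ m ∉ range f, lam * x m = 0) : x = 0 := by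
  by_contra! hx0
  obtain ⟨k, hk⟩ := Function.ne_iff.mp hx0
  have hlam : lam ≠ 0 := by
    rintro rfl
    exact hk (by simpa using (hshift k).symm)
  have hforward : ‖lam⁻¹‖ < 1 := by
    refine hx.norm_lt_one_of_apply_succ_eq_mul hp
      (injective_iterate_apply fun n => hf _) hk fun n => ?_
    rw [iterate_succ_apply', eq_inv_mul_iff_mul_eq₀ hlam, hshift]
  have hpreimage : ∀ m, x m ≠ 0 → ∃ j, f j = m ∧ x j ≠ 0 := by
    intro m hm
    obtain ⟨j, rfl⟩ : m ∈ range f := by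
      by_contra h
      exact hm ((mul_eq_zero.mp (hcorange m h)).resolve_left hlam)
    exact ⟨j, rfl, by rw [← hshift]; exact mul_ne_zero hlam hm⟩
  obtain ⟨b, hb0, hb⟩ := exists_seq_apply_succ_eq hpreimage hk
  have hbackward : ‖lam‖ < 1 := by
    refine hx.norm_lt_one_of_apply_succ_eq_mul hp
      (injective_of_apply_succ_eq (fun n => hf _) fun n => (hb n).2) (hb0 ▸ hk) fun n => ?_
    rw [← (hb n).2, hshift]
  rw [norm_inv, inv_lt_one₀ (norm_pos_iff.2 hlam)] at hforward
  linarith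

namespace lp

variable {ι 𝕜 : Type*} [NormedField 𝕜] {p : ENNReal} [Fact (1 ≤ p)] {f : ι → ι}
  [DecidableEq ι] {S : lp (fun _ : ι => 𝕜) p →L[𝕜] lp (fun _ : ι => 𝕜) p}

theorem hasSum_apply_of_map_single (hp : p ≠ ⊤)
    (hS : ∀ k, S (lp.single p k 1) = lp.single p (f k) 1) (x : lp (fun _ : ι => 𝕜) p) (m : ι) :
    HasSum (fun k => if f k = m then x k else 0) (S x m) := by
  have hterm : ∀ k,
      lp.evalCLM 𝕜 _ p m (S (lp.single p k (x k))) = if f k = m then x k else 0 := by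
    intro k
    have hsmul : lp.single p k (x k) = x k • lp.single (E := fun _ : ι => 𝕜) p k 1 := by
      rw [← lp.single_smul, smul_eq_mul, mul_one]
    rw [hsmul, map_smul, hS]
    simp [lp.evalCLM, lp.single_apply, Pi.single_apply, eq_comm]
  have h := (lp.evalCLM 𝕜 _ p m).hasSum (S.hasSum (lp.hasSum_single hp x))
  rw [funext hterm] at h
  exact h

theorem apply_apply_of_map_single (hp : p ≠ ⊤)
    (hS : ∀ k, S (lp.single p k 1) = lp.single p (f k) 1) (hf : Injective f)
    (x : lp (fun _ : ι => 𝕜) p) (j : ι) : S x (f j) = x j := by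
  refine (hasSum_apply_of_map_single hp hS x (f j)).unique ?_
  simpa using hasSum_single (f := fun k => if f k = f j then x k else 0) j
    fun k hk => if_neg (hf.ne hk)

theorem apply_eq_zero_of_map_single (hp : p ≠ ⊤)
    (hS : ∀ k, S (lp.single p k 1) = lp.single p (f k) 1) (x : lp (fun _ : ι => 𝕜) p)
    {m : ι} (hm : m ∉ range f) : S x m = 0 := by
  refine (hasSum_apply_of_map_single hp hS x m).unique ?_
  have hne : ∀ k, f k ≠ m := fun k h => hm ⟨k, h⟩
  simp [hne]

end lp

/-- If the injection `f` has no periodic points, the isometry `S_f` has empty point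
spectrum. -/
theorem stmt2 (f : ℕ → ℕ) (hf : Function.Injective f)
    (hper : ∀ (k h : ℕ), 1 ≤ h → f^[h] k ≠ k)
    (S : lp (fun _ : ℕ => ℂ) 2 →L[ℂ] lp (fun _ : ℕ => ℂ) 2)
    (hS : ∀ k, S (e k) = e (f k)) :
    ¬ ∃ (x : lp (fun _ : ℕ => ℂ) 2) (lam : ℂ), x ≠ 0 ∧ S x = lam • x := by
  rintro ⟨x, lam, hx, hSx⟩
  have hp : (2 : ENNReal) ≠ ⊤ := ENNReal.ofNat_ne_top
  have hcoef : ∀ m, S x m = lam * x m := fun m => by rw [hSx]; rfl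
  have hshift : ∀ j, lam * x (f j) = x j := fun j => by
    rw [← hcoef, lp.apply_apply_of_map_single hp hS hf]
  have hcorange : ∀ m ∉ range f, lam * x m = 0 := fun m hm => by
    rw [← hcoef, lp.apply_eq_zero_of_map_single hp hS x hm]
  exact hx <| lp.ext <| (lp.memℓp x).eq_zero_of_mul_apply_eq (by norm_num)
    (fun k ⟨h, hh, hk⟩ => hper k h hh hk) hshift hcorange
end

section
/- Let f : ℕ → ℕ be an injective function whose set of periodic points is exactly a single finite cycle F of cardinality n (i.e. F = {j, f(j), …, f^{n-1}(j)} with f^n(j) = j, and f has no periodic points outside F). Then every eigenvector of the isometry S_f on ℓ²(ℕ) lies in span{e_k : k ∈ F}, and the point spectrum of S_f is {z ∈ ℂ : z^n = 1}. -/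
/-!
An eigenvector `x` of `S_f` with eigenvalue `λ` satisfies `x k = λ x (f k)`, and `λ x m = 0`
for `m ∉ range f`. Suppose `x k ≠ 0` for a non-periodic `k`. Its forward orbit is injective and
`‖x k‖ = ‖λ‖ ^ m ‖x (f^[m] k)‖`; as the coordinates of an `ℓ²` vector tend to `0`, this forces
`‖λ‖ > 1`. Then `λ ≠ 0`, so every nonzero coordinate lies in `range f` and `k` has an injective
backward orbit, along which `‖x‖` grows like `‖λ‖ ^ m`: a contradiction. Hence eigenvectors
are supported on the cycle, where `x k = λ ^ n x k` gives `λ ^ n = 1`; conversely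
`∑ i < n, λ⁻ⁱ e (f^[i] j)` is an eigenvector for every `n`-th root of unity `λ`.
-/

open Function Filter Topology Finset
open scoped lp

theorem Finset.sum_range_succ_eq_sum_range_of_apply_eq {M : Type*} [AddCancelCommMonoid M]
    {g : ℕ → M} {n : ℕ} (h : g n = g 0) :
    ∑ i ∈ range n, g (i + 1) = ∑ i ∈ range n, g i :=
  add_right_cancel (b := g 0) <| by rw [← sum_range_succ', sum_range_succ, h]

namespace Function

variable {α : Type*} {f : α → α}

theorem injective_iterate_of_notMem_periodicPts (hf : Injective f) {x : α}
    (hx : x ∉ periodicPts f) : Injective (f^[·] x) := by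
  intro a b hab
  wlog hlt : a < b generalizing a b
  · rcases (not_lt.1 hlt).lt_or_eq with h | h
    exacts [(this hab.symm h).symm, h.symm]
  refine absurd (mk_mem_periodicPts (Nat.sub_pos_of_lt hlt) (hf.iterate a ?_)) hx
  rw [← iterate_add_apply, Nat.add_sub_cancel' hlt.le]
  exact hab.symm

theorem iterate_apply_eq_of_apply_succ_eq {v : ℕ → α} (hv : ∀ m, f (v (m + 1)) = v m)
    (i m : ℕ) : f^[m] (v (i + m)) = v i := by
  induction m with
  | zero => rfl
  | succ m ih => rw [iterate_succ_apply, ← add_assoc, hv, ih]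

theorem injective_of_apply_succ_eq_of_notMem_periodicPts {v : ℕ → α}
    (hv : ∀ m, f (v (m + 1)) = v m) (h0 : v 0 ∉ periodicPts f) : Injective v := by
  intro a b hab
  wlog hlt : a < b generalizing a b
  · rcases (not_lt.1 hlt).lt_or_eq with h | h
    exacts [(this hab.symm h).symm, h.symm]
  obtain ⟨d, rfl⟩ := Nat.exists_eq_add_of_lt hlt
  have hper : IsPeriodicPt f (d + 1) (v (a + d + 1)) := by
    show f^[d + 1] (v (a + (d + 1))) = v (a + d + 1)
    rw [iterate_apply_eq_of_apply_succ_eq hv, hab]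
  have hback := iterate_apply_eq_of_apply_succ_eq hv 0 (a + d + 1)
  rw [zero_add] at hback
  exact absurd (hback ▸ mk_mem_periodicPts d.succ_pos (hper.apply_iterate (a + d + 1))) h0

theorem minimalPeriod_eq_of_injective_iterate {x : α} {n : ℕ} (hn : 0 < n) (hx : f^[n] x = x)
    (hinj : Injective fun i : Fin n => f^[i] x) : minimalPeriod f x = n := by
  refine (IsPeriodicPt.minimalPeriod_le hn hx).antisymm (not_lt.1 fun hlt => ?_)
  have hpos := minimalPeriod_pos_of_mem_periodicPts (mk_mem_periodicPts hn hx)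
  have := @hinj ⟨_, hlt⟩ ⟨0, hn⟩ iterate_minimalPeriod
  simp [Fin.ext_iff] at this
  omega

end Function

theorem Finset.injective_of_card_eq_of_coe_eq_range {α : Type*} {F : Finset α} {n : ℕ}
    {g : Fin n → α} (hcard : F.card = n) (hF : (F : Set α) = Set.range g) : Injective g := by
  classical
  have hF' : F = univ.image g := by rw [← coe_inj, hF, coe_image, coe_univ, Set.image_univ]
  rw [← Set.injOn_univ, ← coe_univ, ← card_image_iff, ← hF', hcard, card_univ, Fintype.card_fin]

theorem lp.exists_norm_apply_lt {ι : Type*} {E : ι → Type*} [∀ i, NormedAddCommGroup (E i)]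
    {p : ENNReal} (hp : 0 < p.toReal) (x : lp E p) {u : ℕ → ι} (hu : Injective u) {c : ℝ}
    (hc : 0 < c) : ∃ m, ‖x (u m)‖ < c := by
  have h := ((lp.memℓp x).summable hp).tendsto_cofinite_zero.rpow_const
    (p := p.toReal⁻¹) (Or.inr (inv_nonneg.2 hp.le))
  rw [Real.zero_rpow (inv_ne_zero hp.ne')] at h
  have hnorm : Tendsto (fun i => ‖x i‖) cofinite (𝓝 0) :=
    h.congr fun i => Real.rpow_rpow_inv (norm_nonneg _) hp.ne'
  exact ((hnorm.comp hu.tendsto_cofinite).eventually_lt_const hc).exists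

theorem e_apply (k m : ℕ) : e k m = if m = k then 1 else 0 := by
  simp [e, lp.single_apply, Pi.single_apply]

theorem hasSum_smul_e (x : ℓ²(ℕ, ℂ)) : HasSum (fun k => x k • e k) x := by
  simpa [e, ← lp.single_smul] using lp.hasSum_single ENNReal.ofNat_ne_top x

theorem mem_span_e_of_apply_eq_zero {x : ℓ²(ℕ, ℂ)} {F : Finset ℕ} (hx : ∀ k ∉ F, x k = 0) :
    x ∈ Submodule.span ℂ {y | ∃ k ∈ F, y = e k} := by
  have hsum : x = ∑ k ∈ F, x k • e k :=
    (hasSum_smul_e x).unique <| hasSum_sum_of_ne_finset_zero fun k hk => by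
      rw [hx k hk, zero_smul]
  rw [hsum]
  exact Submodule.sum_mem _ fun k hk =>
    Submodule.smul_mem _ _ (Submodule.subset_span ⟨k, hk, rfl⟩)

/-- A continuous `S` is determined by its values on the basis, so for injective `f` this says
`S = S_f`. -/
def IsShiftAlong (f : ℕ → ℕ) (S : ℓ²(ℕ, ℂ) →L[ℂ] ℓ²(ℕ, ℂ)) : Prop :=
  ∀ k, S (e k) = e (f k)

namespace IsShiftAlong

variable {f : ℕ → ℕ} {S : ℓ²(ℕ, ℂ) →L[ℂ] ℓ²(ℕ, ℂ)}

theorem hasSum_apply (hS : IsShiftAlong f S) (x : ℓ²(ℕ, ℂ)) (m : ℕ) :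
    HasSum (fun k => x k * e (f k) m) (S x m) := by
  have h := (hasSum_smul_e x).mapL ((lp.evalCLM ℂ (fun _ : ℕ => ℂ) 2 m).comp S)
  simp only [ContinuousLinearMap.comp_apply, map_smul, hS _] at h
  exact h

theorem apply_apply_image (hS : IsShiftAlong f S) (hf : Injective f) (x : ℓ²(ℕ, ℂ)) (k : ℕ) :
    S x (f k) = x k := by
  refine ((hS.hasSum_apply x (f k)).unique (hasSum_single k fun k' hk' => ?_)).trans ?_
  · simp [e_apply, hf.ne hk'.symm]
  · simp [e_apply]

theorem apply_apply_of_notMem_range (hS : IsShiftAlong f S) (x : ℓ²(ℕ, ℂ)) {m : ℕ}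
    (hm : m ∉ Set.range f) : S x m = 0 :=
  (hS.hasSum_apply x m).unique <| (hasSum_zero (α := ℂ)).congr_fun fun k => by
    have hmk : m ≠ f k := fun h => hm ⟨k, h.symm⟩
    simp [e_apply, hmk]

section Eigenvector

variable {x : ℓ²(ℕ, ℂ)} {lam : ℂ}

theorem eigen_apply_eq_mul (hS : IsShiftAlong f S) (hf : Injective f) (hx : S x = lam • x)
    (k : ℕ) : x k = lam * x (f k) := by
  simpa [hx] using (hS.apply_apply_image hf x k).symm

theorem eigen_apply_eq_pow_mul (hS : IsShiftAlong f S) (hf : Injective f) (hx : S x = lam • x)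
    (k m : ℕ) : x k = lam ^ m * x (f^[m] k) := by
  induction m generalizing k with
  | zero => simp
  | succ m ih => rw [hS.eigen_apply_eq_mul hf hx, ih, iterate_succ_apply, pow_succ', mul_assoc]

theorem mem_range_of_eigen_apply_ne_zero (hS : IsShiftAlong f S) (hx : S x = lam • x)
    (hlam : lam ≠ 0) {m : ℕ} (hm : x m ≠ 0) : m ∈ Set.range f := by
  by_contra hmf
  have h := hS.apply_apply_of_notMem_range x hmf
  rw [hx, lp.coeFn_smul, Pi.smul_apply, smul_eq_mul] at h
  exact mul_ne_zero hlam hm h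

theorem eigen_apply_eq_zero_of_notMem_periodicPts (hS : IsShiftAlong f S) (hf : Injective f)
    (hx : S x = lam • x) {k : ℕ} (hk : k ∉ periodicPts f) : x k = 0 := by
  by_contra hxk
  rcases le_total ‖lam‖ 1 with hlam | hlam
  · obtain ⟨m, hm⟩ := lp.exists_norm_apply_lt (by norm_num) x
      (injective_iterate_of_notMem_periodicPts hf hk) (norm_pos_iff.2 hxk)
    have : ‖x k‖ ≤ ‖x (f^[m] k)‖ := calc
      ‖x k‖ = ‖lam‖ ^ m * ‖x (f^[m] k)‖ := by
        rw [hS.eigen_apply_eq_pow_mul hf hx k m, norm_mul, norm_pow]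
      _ ≤ ‖x (f^[m] k)‖ := mul_le_of_le_one_left (norm_nonneg _) (pow_le_one₀ (norm_nonneg _) hlam)
    exact (hm.trans_le this).false
  · have hlam0 : lam ≠ 0 := norm_pos_iff.1 (one_pos.trans_le hlam)
    have hpre : ∀ a, x a ≠ 0 → ∃ b, f b = a ∧ x b ≠ 0 := fun a ha => by
      obtain ⟨b, rfl⟩ := hS.mem_range_of_eigen_apply_ne_zero hx hlam0 ha
      exact ⟨b, rfl, by rw [hS.eigen_apply_eq_mul hf hx b]; exact mul_ne_zero hlam0 ha⟩
    choose! g hg using hpre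
    set v : ℕ → ℕ := fun m => g^[m] k
    have hv_ne : ∀ m, x (v m) ≠ 0 := by
      intro m
      induction m with
      | zero => exact hxk
      | succ m ih => simpa only [v, iterate_succ_apply'] using (hg _ ih).2
    have hv : ∀ m, f (v (m + 1)) = v m := fun m => by
      simpa only [v, iterate_succ_apply'] using (hg _ (hv_ne m)).1
    obtain ⟨m, hm⟩ := lp.exists_norm_apply_lt (by norm_num) x
      (injective_of_apply_succ_eq_of_notMem_periodicPts hv hk) (norm_pos_iff.2 hxk)
    have hback := iterate_apply_eq_of_apply_succ_eq hv 0 m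
    rw [zero_add] at hback
    have : ‖x k‖ ≤ ‖x (v m)‖ := calc
      ‖x k‖ ≤ ‖lam‖ ^ m * ‖x k‖ := le_mul_of_one_le_left (norm_nonneg _) (one_le_pow₀ hlam)
      _ = ‖x (v m)‖ := by
        rw [hS.eigen_apply_eq_pow_mul hf hx (v m) m, norm_mul, norm_pow, hback]
        rfl
    exact (hm.trans_le this).false

theorem pow_eq_one_of_isPeriodicPt (hS : IsShiftAlong f S) (hf : Injective f)
    (hx : S x = lam • x) {n m : ℕ} (hm : IsPeriodicPt f n m) (hxm : x m ≠ 0) : lam ^ n = 1 := by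
  have h := hS.eigen_apply_eq_pow_mul hf hx m n
  rw [hm.eq] at h
  exact (mul_eq_right₀ hxm).1 h.symm

end Eigenvector

theorem exists_eigenvector_of_pow_minimalPeriod_eq_one (hS : IsShiftAlong f S) {j : ℕ}
    (hj : j ∈ periodicPts f) {lam : ℂ} (hlam : lam ^ minimalPeriod f j = 1) :
    ∃ x ≠ 0, S x = lam • x := by
  set n := minimalPeriod f j
  have hn : 0 < n := minimalPeriod_pos_of_mem_periodicPts hj
  have hlam0 : lam ≠ 0 := by
    rintro rfl
    simp [zero_pow hn.ne'] at hlam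
  set g : ℕ → ℓ²(ℕ, ℂ) := fun i => lam⁻¹ ^ i • e (f^[i] j)
  refine ⟨∑ i ∈ range n, g i, fun h0 => ?_, ?_⟩
  · have hcoord : (∑ i ∈ range n, g i) j = 1 := by
      rw [lp.coeFn_sum, Finset.sum_apply, Finset.sum_eq_single 0]
      · simp [g, e_apply]
      · intro i hi hi0
        have : ¬IsPeriodicPt f i j :=
          not_isPeriodicPt_of_pos_of_lt_minimalPeriod hi0 (Finset.mem_range.1 hi)
        simp [g, e_apply, Ne.symm this]
      · simp [hn]
    simp [h0] at hcoord
  · have hg : g n = g 0 := by simp [g, inv_pow, hlam, n, iterate_minimalPeriod]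
    calc S (∑ i ∈ range n, g i) = ∑ i ∈ range n, lam • g (i + 1) := by
          rw [map_sum]
          refine sum_congr rfl fun i _ => ?_
          rw [map_smul, hS, ← iterate_succ_apply' f i j, smul_smul, pow_succ', ← mul_assoc,
            mul_inv_cancel₀ hlam0, one_mul]
      _ = lam • ∑ i ∈ range n, g i := by
          rw [← smul_sum, sum_range_succ_eq_sum_range_of_apply_eq hg]

end IsShiftAlong

/-- If the set of periodic points of the injection `f` is exactly one finite cycle `F`
of cardinality `n`, then every eigenvector of `S_f` lies in `span {e k : k ∈ F}` and
the point spectrum of `S_f` is the set of `n`-th roots of unity. -/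
theorem stmt4 (f : ℕ → ℕ) (hf : Function.Injective f)
    (n : ℕ) (hn : 1 ≤ n) (j : ℕ) (F : Finset ℕ)
    (hFcard : F.card = n)
    (hForb : (F : Set ℕ) = Set.range (fun i : Fin n => f^[(i : ℕ)] j))
    (hcycle : f^[n] j = j)
    (hper : ∀ k : ℕ, (∃ h : ℕ, 1 ≤ h ∧ f^[h] k = k) ↔ k ∈ F)
    (S : lp (fun _ : ℕ => ℂ) 2 →L[ℂ] lp (fun _ : ℕ => ℂ) 2)
    (hS : ∀ k, S (e k) = e (f k)) :
    (∀ (x : lp (fun _ : ℕ => ℂ) 2) (lam : ℂ), x ≠ 0 → S x = lam • x →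
      x ∈ Submodule.span ℂ {y : lp (fun _ : ℕ => ℂ) 2 | ∃ k ∈ F, y = e k}) ∧
    (∀ lam : ℂ, (∃ x : lp (fun _ : ℕ => ℂ) 2, x ≠ 0 ∧ S x = lam • x) ↔ lam ^ n = 1) := by
  have hS : IsShiftAlong f S := hS
  have hperF : ∀ k, k ∈ periodicPts f ↔ k ∈ F := hper
  have hj : j ∈ F := by
    rw [← mem_coe, hForb]
    exact ⟨⟨0, hn⟩, rfl⟩
  have hmin : minimalPeriod f j = n := minimalPeriod_eq_of_injective_iterate hn hcycle
    (injective_of_card_eq_of_coe_eq_range hFcard hForb)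
  have hsupp : ∀ x lam, S x = lam • x → ∀ k ∉ F, x k = 0 := fun x lam hx k hk =>
    hS.eigen_apply_eq_zero_of_notMem_periodicPts hf hx (mt (hperF k).1 hk)
  refine ⟨fun x lam _ hx => mem_span_e_of_apply_eq_zero (hsupp x lam hx), fun lam => ⟨?_, ?_⟩⟩
  · rintro ⟨x, hx0, hx⟩
    obtain ⟨m, hm⟩ : ∃ m, x m ≠ 0 := by
      by_contra! h
      exact hx0 (lp.ext (funext h))
    have hmF : m ∈ (F : Set ℕ) := by_contra fun hmF => hm (hsupp x lam hx m hmF)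
    rw [hForb] at hmF
    obtain ⟨i, rfl⟩ := hmF
    have hj_per : IsPeriodicPt f n j := hcycle
    exact hS.pow_eq_one_of_isPeriodicPt hf hx (hj_per.apply_iterate i) hm
  · intro hlam
    rw [← hmin] at hlam
    exact hS.exists_eigenvector_of_pow_minimalPeriod_eq_one ((hperF j).2 hj) hlam
end

section
/- Let (σ₁, σ₂) be a branching function system of order 2 on ℕ with ⋂_{n≥1} σ₁^n(ℕ) = ∅ and ⋂_{n≥1} σ₂^n(ℕ) = ∅. Then there exists a unique bijection τ : ℕ → ℕ such that τ ∘ σ₂ = σ₁ and τ ∘ σ₁ = σ₂ ∘ τ. -/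
section Aux

attribute [local instance] Classical.propDecidable

variable (σ₁ σ₂ : ℕ → ℕ)

noncomputable def dep8 (hex : ∀ n, ∃ k, n ∉ Set.range (σ₁^[k+1])) (n : ℕ) : ℕ :=
  Nat.find (hex n)

lemma dep8_lt (hex : ∀ n, ∃ k, n ∉ Set.range (σ₁^[k+1])) (x n : ℕ) (h : σ₁ x = n) :
    dep8 σ₁ hex x < dep8 σ₁ hex n := by
  have hne : dep8 σ₁ hex n ≠ 0 := by
    intro h0
    have hs : n ∉ Set.range (σ₁^[Nat.find (hex n) + 1]) := Nat.find_spec (hex n)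
    rw [show Nat.find (hex n) = 0 from h0] at hs
    exact hs ⟨x, by simpa using h⟩
  obtain ⟨d, hd⟩ := Nat.exists_eq_succ_of_ne_zero hne
  have hd' : Nat.find (hex n) = d + 1 := hd
  have hx : x ∉ Set.range (σ₁^[d+1]) := by
    rintro ⟨y, hy⟩
    apply Nat.find_spec (hex n)
    rw [hd']
    exact ⟨y, by rw [Function.iterate_succ', Function.comp_apply, hy, h]⟩
  have hle : dep8 σ₁ hex x ≤ d := by unfold dep8; exact Nat.find_le hx
  omega

noncomputable def tau8 (hex : ∀ n, ∃ k, n ∉ Set.range (σ₁^[k+1])) : ℕ → ℕ :=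
  WellFounded.fix (InvImage.wf (dep8 σ₁ hex) Nat.lt_wfRel.wf) fun n ih =>
    if h : ∃ m, σ₂ m = n then σ₁ h.choose
    else if h' : ∃ x, σ₁ x = n then
      σ₂ (ih h'.choose (dep8_lt σ₁ hex _ _ h'.choose_spec))
    else 0

lemma tau8_eq (hex : ∀ n, ∃ k, n ∉ Set.range (σ₁^[k+1])) (n : ℕ) :
    tau8 σ₁ σ₂ hex n =
      if h : ∃ m, σ₂ m = n then σ₁ h.choose
      else if h' : ∃ x, σ₁ x = n then σ₂ (tau8 σ₁ σ₂ hex h'.choose)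
      else 0 := by
  unfold tau8
  rw [WellFounded.fix_eq]

end Aux

/-- For a branching function system `(σ₁, σ₂)` of order 2 with both
`⋂_{n≥1} σ₁^n(ℕ) = ∅` and `⋂_{n≥1} σ₂^n(ℕ) = ∅`, there is a unique bijection `τ` of `ℕ`
with `τ ∘ σ₂ = σ₁` and `τ ∘ σ₁ = σ₂ ∘ τ`. -/
theorem stmt8 (σ₁ σ₂ : ℕ → ℕ)
    (h₁ : Function.Injective σ₁) (h₂ : Function.Injective σ₂)
    (hdisj : Set.range σ₁ ∩ Set.range σ₂ = ∅)
    (hcover : Set.range σ₁ ∪ Set.range σ₂ = Set.univ)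
    (hint₁ : (⋂ n ∈ Set.Ici 1, Set.range σ₁^[n]) = ∅)
    (hint₂ : (⋂ n ∈ Set.Ici 1, Set.range σ₂^[n]) = ∅) :
    ∃! τ : ℕ → ℕ, Function.Bijective τ ∧ τ ∘ σ₂ = σ₁ ∧ τ ∘ σ₁ = σ₂ ∘ τ := by
  classical
  have hex : ∀ n, ∃ k, n ∉ Set.range (σ₁^[k+1]) := by
    intro n
    by_contra hc
    push_neg at hc
    have hn : n ∈ (⋂ m ∈ Set.Ici 1, Set.range σ₁^[m]) := by
      simp only [Set.mem_iInter, Set.mem_Ici]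
      intro m hm
      obtain ⟨k, rfl⟩ := Nat.exists_eq_succ_of_ne_zero (by omega : m ≠ 0)
      exact hc k
    rw [hint₁] at hn
    exact hn
  have hex₂ : ∀ n, ∃ k, n ∉ Set.range (σ₂^[k+1]) := by
    intro n
    by_contra hc
    push_neg at hc
    have hn : n ∈ (⋂ m ∈ Set.Ici 1, Set.range σ₂^[m]) := by
      simp only [Set.mem_iInter, Set.mem_Ici]
      intro m hm
      obtain ⟨k, rfl⟩ := Nat.exists_eq_succ_of_ne_zero (by omega : m ≠ 0)
      exact hc k
    rw [hint₂] at hn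
    exact hn
  have hdisj' : ∀ a b, σ₁ a ≠ σ₂ b := by
    intro a b hab
    have hm : σ₁ a ∈ Set.range σ₁ ∩ Set.range σ₂ := ⟨⟨a, rfl⟩, ⟨b, hab.symm⟩⟩
    rw [hdisj] at hm
    exact hm
  have hcover' : ∀ n, (∃ a, σ₁ a = n) ∨ (∃ b, σ₂ b = n) := by
    intro n
    have hm : n ∈ Set.range σ₁ ∪ Set.range σ₂ := by rw [hcover]; trivial
    exact hm
  set τ : ℕ → ℕ := tau8 σ₁ σ₂ hex with hτ
  have key2 : ∀ m, τ (σ₂ m) = σ₁ m := by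
    intro m
    rw [hτ, tau8_eq]
    have h : ∃ m', σ₂ m' = σ₂ m := ⟨m, rfl⟩
    rw [dif_pos h]
    exact congrArg σ₁ (h₂ h.choose_spec)
  have key1 : ∀ x, τ (σ₁ x) = σ₂ (τ x) := by
    intro x
    rw [hτ, tau8_eq]
    have hn : ¬ ∃ m, σ₂ m = σ₁ x := by
      rintro ⟨m, hm⟩; exact hdisj' x m hm.symm
    rw [dif_neg hn]
    have h' : ∃ y, σ₁ y = σ₁ x := ⟨x, rfl⟩
    rw [dif_pos h']
    exact congrArg (σ₂ ∘ τ) (h₁ h'.choose_spec)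
  have inj : ∀ d a b, dep8 σ₁ hex a = d → τ a = τ b → a = b := by
    intro d
    induction d using Nat.strong_induction_on with
    | _ d ih =>
      rintro a b rfl hab
      rcases hcover' a with ⟨x, rfl⟩ | ⟨m, rfl⟩
      · rcases hcover' b with ⟨y, rfl⟩ | ⟨m', rfl⟩
        · rw [key1, key1] at hab
          exact congrArg σ₁ (ih _ (dep8_lt σ₁ hex x _ rfl) _ _ rfl (h₂ hab))
        · rw [key1, key2] at hab
          exact absurd hab.symm (hdisj' m' (τ x))
      · rcases hcover' b with ⟨y, rfl⟩ | ⟨m', rfl⟩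
        · rw [key2, key1] at hab
          exact absurd hab (hdisj' m (τ y))
        · rw [key2, key2] at hab
          exact congrArg σ₂ (h₁ hab)
  have surj : ∀ d n, dep8 σ₂ hex₂ n = d → ∃ a, τ a = n := by
    intro d
    induction d using Nat.strong_induction_on with
    | _ d ih =>
      rintro n rfl
      rcases hcover' n with ⟨m, rfl⟩ | ⟨p, rfl⟩
      · exact ⟨σ₂ m, key2 m⟩
      · obtain ⟨a, ha⟩ := ih _ (dep8_lt σ₂ hex₂ p _ rfl) p rfl
        exact ⟨σ₁ a, by rw [key1, ha]⟩
  refine ⟨τ, ⟨⟨fun a b => inj _ a b rfl, fun n => surj _ n rfl⟩, funext key2, funext key1⟩, ?_⟩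
  rintro τ' ⟨-, hτ'2, hτ'1⟩
  have k2' : ∀ m, τ' (σ₂ m) = σ₁ m := fun m => congrFun hτ'2 m
  have k1' : ∀ x, τ' (σ₁ x) = σ₂ (τ' x) := fun x => congrFun hτ'1 x
  have huniq : ∀ d n, dep8 σ₁ hex n = d → τ' n = τ n := by
    intro d
    induction d using Nat.strong_induction_on with
    | _ d ih =>
      rintro n rfl
      rcases hcover' n with ⟨x, rfl⟩ | ⟨m, rfl⟩
      · rw [k1', key1, ih _ (dep8_lt σ₁ hex x _ rfl) x rfl]
      · rw [k2', key2]
  exact funext fun n => huniq _ n rfl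
end

section
/- Let σ : ℕ → ℕ be an injection and τ : ℕ → ℕ a bijection such that σ ∘ τ = τ² ∘ σ (i.e. σ(τ(n)) = τ(τ(σ(n))) for all n) and such that the pair (τ ∘ σ, σ) is a branching function system of order 2 (the ranges of τ∘σ and σ are disjoint and their union is ℕ). Then τ has no periodic points: τ^n(k) ≠ k for all k ∈ ℕ and all n ≥ 1. -/
/-- If `σ` is an injection and `τ` a bijection of `ℕ` with `σ ∘ τ = τ² ∘ σ` such that
`(τ ∘ σ, σ)` is a branching function system of order 2, then `τ` has no periodic
points. -/
theorem stmt9 (σ τ : ℕ → ℕ)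
    (hσ : Function.Injective σ) (hτ : Function.Bijective τ)
    (hcomm : ∀ n, σ (τ n) = τ (τ (σ n)))
    (hdisj : Set.range (τ ∘ σ) ∩ Set.range σ = ∅)
    (hcover : Set.range (τ ∘ σ) ∪ Set.range σ = Set.univ) :
    ∀ (k n : ℕ), 1 ≤ n → τ^[n] k ≠ k := by
  have key : ∀ m x, σ (τ^[m] x) = τ^[2*m] (σ x) := by
    intro m
    induction m with
    | zero => intro x; simp
    | succ m ih =>
      intro x
      rw [Function.iterate_succ_apply, ih, hcomm x]
      have h2 : 2 * (m + 1) = 2 * m + 1 + 1 := by ring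
      rw [h2, Function.iterate_succ_apply, Function.iterate_succ_apply]
  intro k n
  induction n using Nat.strong_induction_on generalizing k with
  | _ n ih =>
    intro hn hper
    have hk : k ∈ Set.range (τ ∘ σ) ∪ Set.range σ := by
      rw [hcover]; trivial
    have hp : ∃ j, τ^[n] (σ j) = σ j := by
      obtain ⟨j, hj⟩ | ⟨j, hj⟩ := hk
      · refine ⟨j, hτ.injective ?_⟩
        have : τ (τ^[n] (σ j)) = τ^[n] (τ (σ j)) :=
          (Function.iterate_succ_apply' τ n (σ j)).symm.trans
            (Function.iterate_succ_apply τ n (σ j))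
        rw [this]
        rw [← hj] at hper
        simpa using hper
      · exact ⟨j, by simpa [hj] using hper⟩
    obtain ⟨j, hj⟩ := hp
    rcases Nat.even_or_odd n with ⟨m, hm⟩ | ⟨m, hm⟩
    · -- even: n = 2m
      have hm' : n = 2 * m := by omega
      have : σ (τ^[m] j) = σ j := by rw [key, ← hm', hj]
      have hmj : τ^[m] j = j := hσ this
      exact ih m (by omega) j (by omega) hmj
    · -- odd: n = 2m+1
      have : σ j = τ (σ (τ^[m] j)) := by
        rw [key, ← Function.iterate_succ_apply' τ (2*m) (σ j), Nat.succ_eq_add_one, ← hm, hj]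
      have h1 : σ j ∈ Set.range (τ ∘ σ) ∩ Set.range σ :=
        ⟨⟨τ^[m] j, this.symm⟩, ⟨j, rfl⟩⟩
      rw [hdisj] at h1
      exact h1
end
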